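/- In the tree-recognition system, if G is an input graph and G ⇒*_𝓡 H, then every △-labelled node of H has either a △-labelled child or a rooted child (a node u is a child of v if some edge has source v and target u). -/

import Mathlib

/-! # Rooted graph transformation with relabelling -/

/-- A graph over a label alphabet `(LV, LE)`: finite vertex and edge sets, total
source/target functions, a partial node-labelling function `l`, a total
edge-labelling function `m`, and a partial rootedness function `p`
(`some true` = root node, `some false` = non-root, `none` = undefined). -/
structure RGraph (LV LE : Type) : Type 1 where
  V : Type
  E : Type
  finV : Finite V
  finE : Finite E
  s : E → V
  t : E → V
  l : V → Option LV
  m : E → LE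
  p : V → Option Bool

namespace RGraph

variable {LV LE : Type}

def IsTotallyLabelled (G : RGraph LV LE) : Prop := ∀ v, (G.l v).isSome
def IsTotallyRooted (G : RGraph LV LE) : Prop := ∀ v, (G.p v).isSome
/-- totally labelled, totally rooted graph -/
def IsTLRG (G : RGraph LV LE) : Prop := G.IsTotallyLabelled ∧ G.IsTotallyRooted

/-- The number of root nodes `|p⁻¹({1})|`. -/
noncomputable def rootCount (G : RGraph LV LE) : ℕ := Nat.card {v : G.V // G.p v = some true}

/-- The degree of a node. -/
noncomputable def degree (G : RGraph LV LE) (v : G.V) : ℕ :=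
  Nat.card {e : G.E // G.s e = v} + Nat.card {e : G.E // G.t e = v}

end RGraph

/-- RGraph morphisms preserve sources, targets, edge labels, and node labels and
rootedness wherever these are defined. -/
structure Morphism {LV LE : Type} (G H : RGraph LV LE) : Type where
  fV : G.V → H.V
  fE : G.E → H.E
  src : ∀ e, fV (G.s e) = H.s (fE e)
  tgt : ∀ e, fV (G.t e) = H.t (fE e)
  edgeLabel : ∀ e, G.m e = H.m (fE e)
  nodeLabel : ∀ v x, G.l v = some x → H.l (fV v) = some x
  rootedness : ∀ v b, G.p v = some b → H.p (fV v) = some b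

namespace Morphism

variable {LV LE : Type} {G H K : RGraph LV LE}

def Injective (g : Morphism G H) : Prop := Function.Injective g.fV ∧ Function.Injective g.fE

/-- identity morphism -/
def ident (G : RGraph LV LE) : Morphism G G where
  fV := id
  fE := id
  src := fun _ => rfl
  tgt := fun _ => rfl
  edgeLabel := fun _ => rfl
  nodeLabel := fun _ _ h => h
  rootedness := fun _ _ h => h

/-- composition of morphisms -/
def comp (g : Morphism G H) (h : Morphism H K) : Morphism G K where
  fV := h.fV ∘ g.fV
  fE := h.fE ∘ g.fE
  src := fun e => by simp [Function.comp, g.src e, h.src (g.fE e)]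
  tgt := fun e => by simp [Function.comp, g.tgt e, h.tgt (g.fE e)]
  edgeLabel := fun e => by simp [Function.comp, ← h.edgeLabel (g.fE e), g.edgeLabel e]
  nodeLabel := fun v x hx => h.nodeLabel _ _ (g.nodeLabel v x hx)
  rootedness := fun v b hb => h.rootedness _ _ (g.rootedness v b hb)

end Morphism

/-- An isomorphism of graphs: a morphism with a two-sided inverse morphism. -/
structure Iso {LV LE : Type} (G H : RGraph LV LE) : Type where
  toMor : Morphism G H
  invMor : Morphism H G
  leftV : ∀ v, invMor.fV (toMor.fV v) = v
  leftE : ∀ e, invMor.fE (toMor.fE e) = e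
  rightV : ∀ v, toMor.fV (invMor.fV v) = v
  rightE : ∀ e, toMor.fE (invMor.fE e) = e

/-- A rule `⟨L ← K → R⟩`: graphs `L`, `K`, `R` together with inclusion
(injective) morphisms `K ↪ L` and `K ↪ R`.  (In the rooted relabelling setting
`L` and `R` are additionally required to be TLRGs; this requirement is stated
as a hypothesis where needed.) -/
structure Rule (LV LE : Type) : Type 1 where
  L : RGraph LV LE
  K : RGraph LV LE
  R : RGraph LV LE
  incL : Morphism K L
  incR : Morphism K R
  injL : incL.Injective
  injR : incR.Injective

namespace Rule

variable {LV LE : Type} (r : Rule LV LE) (G : RGraph LV LE)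

/-- The inverse rule `r⁻¹ = ⟨R ← K → L⟩`. -/
def inv (r : Rule LV LE) : Rule LV LE where
  L := r.R
  K := r.K
  R := r.L
  incL := r.incR
  incR := r.incL
  injL := r.injR
  injR := r.injL

/-- The dangling condition: no edge of `G ∖ g(L)` is incident to a node of `g(L ∖ K)`. -/
def Dangling (g : Morphism r.L G) : Prop :=
  ∀ e : G.E, (∀ e' : r.L.E, g.fE e' ≠ e) →
    ∀ v : r.L.V, (∀ k : r.K.V, r.incL.fV k ≠ v) →
      G.s e ≠ g.fV v ∧ G.t e ≠ g.fV v

/-- The match `g` is applicable: it is injective and satisfies the dangling condition. -/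
def Applicable (g : Morphism r.L G) : Prop := g.Injective ∧ r.Dangling G g

/-- the nodes `g(L ∖ K)` deleted by applying `r` via `g` -/
def DelV (g : Morphism r.L G) : Set G.V :=
  {x | ∃ v : r.L.V, (∀ k : r.K.V, r.incL.fV k ≠ v) ∧ g.fV v = x}

/-- the edges `g(L ∖ K)` deleted by applying `r` via `g` -/
def DelE (g : Morphism r.L G) : Set G.E :=
  {x | ∃ e : r.L.E, (∀ k : r.K.E, r.incL.fE k ≠ e) ∧ g.fE e = x}

theorem kept_incL {g : Morphism r.L G} (hinj : g.Injective) (k : r.K.V) :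
    g.fV (r.incL.fV k) ∉ r.DelV G g := by
  rintro ⟨v, hv, heq⟩
  exact hv k (hinj.1 heq).symm

theorem kept_src {g : Morphism r.L G} (h : r.Applicable G g) {e : G.E}
    (he : e ∉ r.DelE G g) : G.s e ∉ r.DelV G g := by
  rintro ⟨v, hv, heq⟩
  by_cases hc : ∃ e', g.fE e' = e
  · obtain ⟨e', rfl⟩ := hc
    by_cases hk : ∃ k, r.incL.fE k = e'
    · obtain ⟨k, rfl⟩ := hk
      have h1 : g.fV (r.L.s (r.incL.fE k)) = G.s (g.fE (r.incL.fE k)) := g.src _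
      have h2 : r.incL.fV (r.K.s k) = r.L.s (r.incL.fE k) := r.incL.src k
      have h3 : g.fV v = g.fV (r.incL.fV (r.K.s k)) := by rw [heq, h2, h1]
      exact hv _ (h.1.1 h3).symm
    · exact he ⟨e', fun k hk' => hk ⟨k, hk'⟩, rfl⟩
  · exact (h.2 e (fun e' he' => hc ⟨e', he'⟩) v hv).1 heq.symm

theorem kept_tgt {g : Morphism r.L G} (h : r.Applicable G g) {e : G.E}
    (he : e ∉ r.DelE G g) : G.t e ∉ r.DelV G g := by
  rintro ⟨v, hv, heq⟩
  by_cases hc : ∃ e', g.fE e' = e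
  · obtain ⟨e', rfl⟩ := hc
    by_cases hk : ∃ k, r.incL.fE k = e'
    · obtain ⟨k, rfl⟩ := hk
      have h1 : g.fV (r.L.t (r.incL.fE k)) = G.t (g.fE (r.incL.fE k)) := g.tgt _
      have h2 : r.incL.fV (r.K.t k) = r.L.t (r.incL.fE k) := r.incL.tgt k
      have h3 : g.fV v = g.fV (r.incL.fV (r.K.t k)) := by rw [heq, h2, h1]
      exact hv _ (h.1.1 h3).symm
    · exact he ⟨e', fun k hk' => hk ⟨k, hk'⟩, rfl⟩
  · exact (h.2 e (fun e' he' => hc ⟨e', he'⟩) v hv).2 heq.symm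

attribute [local instance] Classical.propDecidable

/-- The result graph of applying `r` to `G` via an applicable match `g`:
delete `g(L ∖ K)` (undefining labels/rootedness of images of interface nodes
where they are undefined in `K`), then add `R ∖ K` disjointly, relabelling
(and re-rooting) the images of interface nodes according to `R`. -/
noncomputable def result (g : Morphism r.L G) (h : r.Applicable G g) : RGraph LV LE where
  V := {x : G.V // x ∉ r.DelV G g} ⊕ {v : r.R.V // ∀ k, r.incR.fV k ≠ v}
  E := {x : G.E // x ∉ r.DelE G g} ⊕ {e : r.R.E // ∀ k, r.incR.fE k ≠ e}
  finV := by
    haveI := G.finV; haveI := r.R.finV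
    infer_instance
  finE := by
    haveI := G.finE; haveI := r.R.finE
    infer_instance
  s := fun e =>
    match e with
    | Sum.inl x => Sum.inl ⟨G.s x.1, r.kept_src G h x.2⟩
    | Sum.inr x =>
        if hk : ∃ k, r.incR.fV k = r.R.s x.1 then
          Sum.inl ⟨g.fV (r.incL.fV hk.choose), r.kept_incL G h.1 _⟩
        else Sum.inr ⟨r.R.s x.1, fun k hk' => hk ⟨k, hk'⟩⟩
  t := fun e =>
    match e with
    | Sum.inl x => Sum.inl ⟨G.t x.1, r.kept_tgt G h x.2⟩
    | Sum.inr x =>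
        if hk : ∃ k, r.incR.fV k = r.R.t x.1 then
          Sum.inl ⟨g.fV (r.incL.fV hk.choose), r.kept_incL G h.1 _⟩
        else Sum.inr ⟨r.R.t x.1, fun k hk' => hk ⟨k, hk'⟩⟩
  l := fun v =>
    match v with
    | Sum.inl x =>
        if hk : ∃ k : r.K.V, r.K.l k = none ∧ g.fV (r.incL.fV k) = x.1 then
          r.R.l (r.incR.fV hk.choose)
        else G.l x.1
    | Sum.inr v => r.R.l v.1
  m := fun e =>
    match e with
    | Sum.inl x => G.m x.1
    | Sum.inr x => r.R.m x.1
  p := fun v =>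
    match v with
    | Sum.inl x =>
        if hk : ∃ k : r.K.V, r.K.p k = none ∧ g.fV (r.incL.fV k) = x.1 then
          r.R.p (r.incR.fV hk.choose)
        else G.p x.1
    | Sum.inr v => r.R.p v.1

/-- Direct derivation `G ⇒_r M`: there is an applicable match `g` such that `M`
is isomorphic to the result of applying `r` to `G` via `g`. -/
def Deriv (r : Rule LV LE) (G M : RGraph LV LE) : Prop :=
  ∃ (g : Morphism r.L G) (h : r.Applicable G g), Nonempty (Iso (r.result G g h) M)

end Rule

/-- `G ⇒_𝓡 H` for a set of rules. -/
def GTStep {LV LE : Type} (Rs : Set (Rule LV LE)) (G H : RGraph LV LE) : Prop :=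
  ∃ r ∈ Rs, r.Deriv G H

/-- `G ⇒*_𝓡 H`: the reflexive-transitive closure of `⇒_𝓡`, up to isomorphism. -/
def GTDerivStar {LV LE : Type} (Rs : Set (Rule LV LE)) (G H : RGraph LV LE) : Prop :=
  Relation.ReflTransGen (GTStep Rs) G H ∨ Nonempty (Iso G H)
/-! ## The tree-recognition system -/

/-- node labels: `□` (square) and `△` (triangle) -/
inductive NodeLab : Type where
  | square : NodeLab
  | tri : NodeLab
deriving DecidableEq

/-- `L` of rule `r0`: `v1 --□--> v2`, both `□`-labelled, `v1` unrooted, `v2` rooted. -/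
abbrev L0 : RGraph NodeLab Unit where
  V := Fin 2
  E := Unit
  finV := inferInstance
  finE := inferInstance
  s := fun _ => 0
  t := fun _ => 1
  l := fun _ => some .square
  m := fun _ => ()
  p := ![some false, some true]

/-- `K` of rules `r0` and `r1`: the single node `v1`, unlabelled, rootedness undefined. -/
abbrev K0 : RGraph NodeLab Unit where
  V := Unit
  E := PEmpty
  finV := inferInstance
  finE := inferInstance
  s := PEmpty.elim
  t := PEmpty.elim
  l := fun _ => none
  m := PEmpty.elim
  p := fun _ => none

/-- `R` of rules `r0` and `r1`: the single node `v1`, labelled `□`, rooted. -/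
abbrev R0 : RGraph NodeLab Unit where
  V := Unit
  E := PEmpty
  finV := inferInstance
  finE := inferInstance
  s := PEmpty.elim
  t := PEmpty.elim
  l := fun _ => some .square
  m := PEmpty.elim
  p := fun _ => some true

def incL0 : Morphism K0 L0 where
  fV := fun _ => 0
  fE := PEmpty.elim
  src := fun e => e.elim
  tgt := fun e => e.elim
  edgeLabel := fun e => e.elim
  nodeLabel := fun _ _ h => nomatch h
  rootedness := fun _ _ h => nomatch h

def incR0 : Morphism K0 R0 where
  fV := id
  fE := PEmpty.elim
  src := fun e => e.elim
  tgt := fun e => e.elim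
  edgeLabel := fun e => e.elim
  nodeLabel := fun _ _ h => nomatch h
  rootedness := fun _ _ h => nomatch h

/-- rule `r0`: prune a rooted `□`-leaf with unrooted `□`-parent, root moves to the parent -/
def r0 : Rule NodeLab Unit where
  L := L0
  K := K0
  R := R0
  incL := incL0
  incR := incR0
  injL := ⟨Function.injective_of_subsingleton _, Function.injective_of_subsingleton _⟩
  injR := ⟨Function.injective_of_subsingleton _, Function.injective_of_subsingleton _⟩

/-- `L` of rule `r1`: like `L0` but `v1` is labelled `△`. -/
abbrev L1 : RGraph NodeLab Unit where
  V := Fin 2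
  E := Unit
  finV := inferInstance
  finE := inferInstance
  s := fun _ => 0
  t := fun _ => 1
  l := ![some .tri, some .square]
  m := fun _ => ()
  p := ![some false, some true]

def incL1 : Morphism K0 L1 where
  fV := fun _ => 0
  fE := PEmpty.elim
  src := fun e => e.elim
  tgt := fun e => e.elim
  edgeLabel := fun e => e.elim
  nodeLabel := fun _ _ h => nomatch h
  rootedness := fun _ _ h => nomatch h

/-- rule `r1`: prune a rooted `□`-leaf with unrooted `△`-parent, root moves to the
parent which becomes `□`-labelled -/
def r1 : Rule NodeLab Unit where
  L := L1
  K := K0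
  R := R0
  incL := incL1
  incR := incR0
  injL := ⟨Function.injective_of_subsingleton _, Function.injective_of_subsingleton _⟩
  injR := ⟨Function.injective_of_subsingleton _, Function.injective_of_subsingleton _⟩

/-- `L` of rule `r2`: `v1 --□--> v2`, both `□`-labelled, `v1` rooted, `v2` unrooted. -/
abbrev L2 : RGraph NodeLab Unit where
  V := Fin 2
  E := Unit
  finV := inferInstance
  finE := inferInstance
  s := fun _ => 0
  t := fun _ => 1
  l := fun _ => some .square
  m := fun _ => ()
  p := ![some true, some false]

/-- `K` of rule `r2`: nodes `v1, v2`, unlabelled, rootedness undefined, no edges. -/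
abbrev K2 : RGraph NodeLab Unit where
  V := Fin 2
  E := PEmpty
  finV := inferInstance
  finE := inferInstance
  s := PEmpty.elim
  t := PEmpty.elim
  l := fun _ => none
  m := PEmpty.elim
  p := fun _ => none

/-- `R` of rule `r2`: `v1 --□--> v2`, `v1` labelled `△` and unrooted, `v2` labelled `□`
and rooted. -/
abbrev R2 : RGraph NodeLab Unit where
  V := Fin 2
  E := Unit
  finV := inferInstance
  finE := inferInstance
  s := fun _ => 0
  t := fun _ => 1
  l := ![some .tri, some .square]
  m := fun _ => ()
  p := ![some false, some true]

def incL2 : Morphism K2 L2 where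
  fV := id
  fE := PEmpty.elim
  src := fun e => e.elim
  tgt := fun e => e.elim
  edgeLabel := fun e => e.elim
  nodeLabel := fun _ _ h => nomatch h
  rootedness := fun _ _ h => nomatch h

def incR2 : Morphism K2 R2 where
  fV := id
  fE := PEmpty.elim
  src := fun e => e.elim
  tgt := fun e => e.elim
  edgeLabel := fun e => e.elim
  nodeLabel := fun _ _ h => nomatch h
  rootedness := fun _ _ h => nomatch h

/-- rule `r2`: push the root one step down an edge, marking the old position `△` -/
def r2 : Rule NodeLab Unit where
  L := L2
  K := K2
  R := R2
  incL := incL2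
  incR := incR2
  injL := ⟨Function.injective_id, Function.injective_of_subsingleton _⟩
  injR := ⟨Function.injective_id, Function.injective_of_subsingleton _⟩

/-- the rule set of the tree-recognition system -/
def TreeRules : Set (Rule NodeLab Unit) := {r0, r1, r2}

/-! ## Trees -/

/-- `IsUndirWalk G v l w`: `l` is an undirected walk from `v` to `w` in `G`;
each step is an edge together with a boolean telling in which direction it is
traversed. -/
def IsUndirWalk {LV LE : Type} (G : RGraph LV LE) : G.V → List (G.E × Bool) → G.V → Prop
  | v, [], w => v = w
  | v, (e, true) :: rest, w => G.s e = v ∧ IsUndirWalk G (G.t e) rest w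
  | v, (e, false) :: rest, w => G.t e = v ∧ IsUndirWalk G (G.s e) rest w

/-- connectedness via undirected walks -/
def IsConnectedGraph {LV LE : Type} (G : RGraph LV LE) : Prop :=
  ∀ v w : G.V, ∃ l, IsUndirWalk G v l w

/-- an undirected cycle: a non-empty closed undirected walk without repeated edges -/
def HasUndirCycle {LV LE : Type} (G : RGraph LV LE) : Prop :=
  ∃ (v : G.V) (l : List (G.E × Bool)), l ≠ [] ∧ IsUndirWalk G v l v ∧ (l.map Prod.fst).Nodup

/-- a tree: non-empty, connected, no undirected cycles, and every node has at
most one incoming edge -/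
def IsTree {LV LE : Type} (G : RGraph LV LE) : Prop :=
  Nonempty G.V ∧ IsConnectedGraph G ∧ ¬ HasUndirCycle G ∧
    ∀ v : G.V, Nat.card {e : G.E // G.t e = v} ≤ 1

/-- an input graph: a TLRG with exactly one root node, all nodes labelled `□`
(all edges are `□`-labelled since `Unit` is the edge alphabet) -/
def IsInputGraph (G : RGraph NodeLab Unit) : Prop :=
  G.IsTLRG ∧ (∀ v, G.l v = some .square) ∧ G.rootCount = 1

/-- no rule of `Rs` is applicable to `H` -/
def InNormalForm {LV LE : Type} (Rs : Set (Rule LV LE)) (H : RGraph LV LE) : Prop :=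
  ¬ ∃ r ∈ Rs, ∃ g : Morphism r.L H, r.Applicable H g

/-! The invariant is transported along the comatch `R → H` of a derivation step: every node of
the result graph is either the image of a node of `R`, where a `△`-node finds its chain inside
`R`, or an untouched node of `G`, whose chain survives because an edge leaving an untouched
node is never deleted and its target, if it lies in the interface, becomes `△` or rooted. -/

def IsTriOrRoot {LE : Type} (H : RGraph NodeLab LE) (v : H.V) : Prop :=
  H.l v = some .tri ∨ H.p v = some true

def HasTriangleChains {LE : Type} (H : RGraph NodeLab LE) : Prop :=
  ∀ v : H.V, H.l v = some .tri → ∃ e : H.E, H.s e = v ∧ IsTriOrRoot H (H.t e)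

section Transport

variable {LE : Type} {G H : RGraph NodeLab LE}

theorem IsTriOrRoot.map (f : Morphism G H) {v : G.V} (hv : IsTriOrRoot G v) :
    IsTriOrRoot H (f.fV v) :=
  hv.imp (f.nodeLabel v _) (f.rootedness v _)

theorem exists_chain_map (f : Morphism G H) {v : G.V}
    (hv : ∃ e : G.E, G.s e = v ∧ IsTriOrRoot G (G.t e)) :
    ∃ e : H.E, H.s e = f.fV v ∧ IsTriOrRoot H (H.t e) := by
  obtain ⟨e, rfl, he⟩ := hv
  exact ⟨f.fE e, (f.src e).symm, f.tgt e ▸ he.map f⟩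

theorem HasTriangleChains.of_iso (i : Iso G H) (hG : HasTriangleChains G) :
    HasTriangleChains H := by
  intro v hv
  rw [← i.rightV v]
  exact exists_chain_map i.toMor (hG _ (i.invMor.nodeLabel v _ hv))

theorem hasTriangleChains_of_forall_square (hG : ∀ v, G.l v = some .square) :
    HasTriangleChains G := by
  intro v hv
  simp [hG v] at hv

end Transport

namespace Rule

variable {LV LE : Type} {r : Rule LV LE} {G : RGraph LV LE} {g : Morphism r.L G}

theorem kept_incL_edge (hinj : g.Injective) (k : r.K.E) : g.fE (r.incL.fE k) ∉ r.DelE G g := by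
  rintro ⟨e, he, heq⟩
  exact he k (hinj.2 heq).symm

theorem kept_of_kept_src {e : G.E} (hs : G.s e ∉ r.DelV G g)
    (hK : ∀ k, g.fV (r.incL.fV k) ≠ G.s e) : e ∉ r.DelE G g := by
  rintro ⟨e', -, rfl⟩
  by_cases hk : ∃ k, r.incL.fV k = r.L.s e'
  · obtain ⟨k, hk⟩ := hk
    exact hK k (by rw [hk, g.src])
  · exact hs ⟨_, fun k h => hk ⟨k, h⟩, g.src e'⟩

section Comatch

attribute [local instance] Classical.propDecidable

variable (h : r.Applicable G g)

noncomputable def comatchV (v : r.R.V) : (r.result G g h).V :=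
  if hk : ∃ k, r.incR.fV k = v then Sum.inl ⟨g.fV (r.incL.fV hk.choose), r.kept_incL G h.1 _⟩
  else Sum.inr ⟨v, fun k hk' => hk ⟨k, hk'⟩⟩

noncomputable def comatchE (e : r.R.E) : (r.result G g h).E :=
  if hk : ∃ k, r.incR.fE k = e then Sum.inl ⟨g.fE (r.incL.fE hk.choose), kept_incL_edge h.1 _⟩
  else Sum.inr ⟨e, fun k hk' => hk ⟨k, hk'⟩⟩

theorem comatchV_incR (k : r.K.V) :
    comatchV h (r.incR.fV k) = Sum.inl ⟨g.fV (r.incL.fV k), r.kept_incL G h.1 k⟩ := by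
  have hk : ∃ k', r.incR.fV k' = r.incR.fV k := ⟨k, rfl⟩
  refine (dif_pos hk).trans (congrArg Sum.inl (Subtype.ext ?_))
  exact congrArg (fun k' => g.fV (r.incL.fV k')) (r.injR.1 hk.choose_spec)

theorem comatchE_incR (k : r.K.E) :
    comatchE h (r.incR.fE k) = Sum.inl ⟨g.fE (r.incL.fE k), kept_incL_edge h.1 k⟩ := by
  have hk : ∃ k', r.incR.fE k' = r.incR.fE k := ⟨k, rfl⟩
  refine (dif_pos hk).trans (congrArg Sum.inl (Subtype.ext ?_))
  exact congrArg (fun k' => g.fE (r.incL.fE k')) (r.injR.2 hk.choose_spec)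

theorem comatchV_of_forall_ne {v : r.R.V} (hv : ∀ k, r.incR.fV k ≠ v) :
    comatchV h v = Sum.inr ⟨v, hv⟩ :=
  dif_neg fun ⟨k, hk⟩ => hv k hk

theorem comatchE_of_forall_ne {e : r.R.E} (he : ∀ k, r.incR.fE k ≠ e) :
    comatchE h e = Sum.inr ⟨e, he⟩ :=
  dif_neg fun ⟨k, hk⟩ => he k hk

theorem result_l_of_forall_ne {x : {x : G.V // x ∉ r.DelV G g}}
    (hx : ∀ k, g.fV (r.incL.fV k) ≠ x.1) : (r.result G g h).l (Sum.inl x) = G.l x.1 :=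
  dif_neg fun ⟨k, _, hk⟩ => hx k hk

theorem result_p_of_forall_ne {x : {x : G.V // x ∉ r.DelV G g}}
    (hx : ∀ k, g.fV (r.incL.fV k) ≠ x.1) : (r.result G g h).p (Sum.inl x) = G.p x.1 :=
  dif_neg fun ⟨k, _, hk⟩ => hx k hk

theorem result_l_incL {k : r.K.V} {a : LV} (ha : r.R.l (r.incR.fV k) = some a) :
    (r.result G g h).l (Sum.inl ⟨g.fV (r.incL.fV k), r.kept_incL G h.1 k⟩) = some a := by
  show dite _ _ _ = _
  split_ifs with hk
  · rwa [r.injL.1 (h.1.1 hk.choose_spec.2)]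
  · -- `K` fixes the label, so `G` keeps it, and both `incR` and `g ∘ incL` preserve it
    obtain ⟨b, hb⟩ := Option.ne_none_iff_exists'.mp fun hn => hk ⟨k, hn, rfl⟩
    rw [r.incR.nodeLabel k b hb, Option.some_inj] at ha
    exact ha ▸ g.nodeLabel _ _ (r.incL.nodeLabel k b hb)

theorem result_p_incL {k : r.K.V} {b : Bool} (hb : r.R.p (r.incR.fV k) = some b) :
    (r.result G g h).p (Sum.inl ⟨g.fV (r.incL.fV k), r.kept_incL G h.1 k⟩) = some b := by
  show dite _ _ _ = _
  split_ifs with hk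
  · rwa [r.injL.1 (h.1.1 hk.choose_spec.2)]
  · obtain ⟨c, hc⟩ := Option.ne_none_iff_exists'.mp fun hn => hk ⟨k, hn, rfl⟩
    rw [r.incR.rootedness k c hc, Option.some_inj] at hb
    exact hb ▸ g.rootedness _ _ (r.incL.rootedness k c hc)

theorem comatch_src (e : r.R.E) : comatchV h (r.R.s e) = (r.result G g h).s (comatchE h e) := by
  by_cases he : ∃ k, r.incR.fE k = e
  · obtain ⟨k, rfl⟩ := he
    rw [comatchE_incR, ← r.incR.src, comatchV_incR]
    exact congrArg Sum.inl (Subtype.ext ((congrArg g.fV (r.incL.src k)).trans (g.src _)))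
  · rw [comatchE_of_forall_ne h fun k hk => he ⟨k, hk⟩]
    rfl

theorem comatch_tgt (e : r.R.E) : comatchV h (r.R.t e) = (r.result G g h).t (comatchE h e) := by
  by_cases he : ∃ k, r.incR.fE k = e
  · obtain ⟨k, rfl⟩ := he
    rw [comatchE_incR, ← r.incR.tgt, comatchV_incR]
    exact congrArg Sum.inl (Subtype.ext ((congrArg g.fV (r.incL.tgt k)).trans (g.tgt _)))
  · rw [comatchE_of_forall_ne h fun k hk => he ⟨k, hk⟩]
    rfl

theorem comatch_edgeLabel (e : r.R.E) : r.R.m e = (r.result G g h).m (comatchE h e) := by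
  by_cases he : ∃ k, r.incR.fE k = e
  · obtain ⟨k, rfl⟩ := he
    rw [comatchE_incR, ← r.incR.edgeLabel, r.incL.edgeLabel, g.edgeLabel]
    rfl
  · rw [comatchE_of_forall_ne h fun k hk => he ⟨k, hk⟩]
    rfl

theorem comatch_nodeLabel (v : r.R.V) (a : LV) (ha : r.R.l v = some a) :
    (r.result G g h).l (comatchV h v) = some a := by
  by_cases hv : ∃ k, r.incR.fV k = v
  · obtain ⟨k, rfl⟩ := hv
    rw [comatchV_incR]
    exact result_l_incL h ha
  · rw [comatchV_of_forall_ne h fun k hk => hv ⟨k, hk⟩]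
    exact ha

theorem comatch_rootedness (v : r.R.V) (b : Bool) (hb : r.R.p v = some b) :
    (r.result G g h).p (comatchV h v) = some b := by
  by_cases hv : ∃ k, r.incR.fV k = v
  · obtain ⟨k, rfl⟩ := hv
    rw [comatchV_incR]
    exact result_p_incL h hb
  · rw [comatchV_of_forall_ne h fun k hk => hv ⟨k, hk⟩]
    exact hb

noncomputable def comatch : Morphism r.R (r.result G g h) where
  fV := comatchV h
  fE := comatchE h
  src := comatch_src h
  tgt := comatch_tgt h
  edgeLabel := comatch_edgeLabel h
  nodeLabel := comatch_nodeLabel h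
  rootedness := comatch_rootedness h

theorem mem_range_comatch_or_untouched (w : (r.result G g h).V) :
    (∃ v, (comatch h).fV v = w) ∨
      ∃ x, (∀ k, g.fV (r.incL.fV k) ≠ x.1) ∧ (Sum.inl x : (r.result G g h).V) = w := by
  rcases w with x | ⟨v, hv⟩
  · by_cases hx : ∃ k, g.fV (r.incL.fV k) = x.1
    · obtain ⟨k, hk⟩ := hx
      exact Or.inl ⟨r.incR.fV k, (comatchV_incR h k).trans (congrArg Sum.inl (Subtype.ext hk))⟩
    · exact Or.inr ⟨x, fun k hk => hx ⟨k, hk⟩, rfl⟩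
  · exact Or.inl ⟨v, comatchV_of_forall_ne h hv⟩

end Comatch

def HasChainedRHS {LE : Type} (r : Rule NodeLab LE) : Prop :=
  r.R.IsTotallyLabelled ∧ HasTriangleChains r.R ∧ ∀ k, IsTriOrRoot r.R (r.incR.fV k)

theorem HasChainedRHS.result {LE : Type} {r : Rule NodeLab LE} {G : RGraph NodeLab LE}
    {g : Morphism r.L G} (hr : r.HasChainedRHS) (h : r.Applicable G g)
    (hG : HasTriangleChains G) : HasTriangleChains (r.result G g h) := by
  obtain ⟨hRl, hR, hK⟩ := hr
  intro w hw
  rcases r.mem_range_comatch_or_untouched h w with ⟨v, rfl⟩ | ⟨x, hx, rfl⟩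
  · obtain ⟨a, ha⟩ := Option.isSome_iff_exists.mp (hRl v)
    have hv : r.R.l v = some .tri := by rwa [← hw, (comatch h).nodeLabel v a ha]
    exact exists_chain_map (comatch h) (hR v hv)
  · rw [result_l_of_forall_ne h hx] at hw
    obtain ⟨e, hs, he⟩ := hG x.1 hw
    have hkept : e ∉ r.DelE G g := kept_of_kept_src (hs ▸ x.2) (hs ▸ hx)
    refine ⟨Sum.inl ⟨e, hkept⟩, congrArg Sum.inl (Subtype.ext hs), ?_⟩
    by_cases hy : ∃ k, g.fV (r.incL.fV k) = G.t e
    · obtain ⟨k, hk⟩ := hy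
      have ht : (r.result G g h).t (Sum.inl ⟨e, hkept⟩) = (comatch h).fV (r.incR.fV k) :=
        ((comatchV_incR h k).trans (congrArg Sum.inl (Subtype.ext hk))).symm
      exact ht ▸ (hK k).map (comatch h)
    · have hy' : ∀ k, g.fV (r.incL.fV k) ≠ G.t e := fun k hk => hy ⟨k, hk⟩
      exact he.imp (fun h' => (result_l_of_forall_ne h hy').trans h')
        (fun h' => (result_p_of_forall_ne h hy').trans h')

end Rule

theorem GTStep.hasTriangleChains {LE : Type} {Rs : Set (Rule NodeLab LE)}
    {G H : RGraph NodeLab LE} (hRs : ∀ r ∈ Rs, r.HasChainedRHS) (hstep : GTStep Rs G H)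
    (hG : HasTriangleChains G) : HasTriangleChains H := by
  obtain ⟨r, hr, g, h, ⟨i⟩⟩ := hstep
  exact ((hRs r hr).result h hG).of_iso i

theorem GTDerivStar.hasTriangleChains {LE : Type} {Rs : Set (Rule NodeLab LE)}
    {G H : RGraph NodeLab LE} (hRs : ∀ r ∈ Rs, r.HasChainedRHS) (hd : GTDerivStar Rs G H)
    (hG : HasTriangleChains G) : HasTriangleChains H := by
  rcases hd with hd | hi
  · induction hd with
    | refl => exact hG
    | tail _ hstep ih => exact hstep.hasTriangleChains hRs ih
  · exact hG.of_iso hi.some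

theorem hasChainedRHS_r0 : r0.HasChainedRHS :=
  ⟨fun _ => rfl, hasTriangleChains_of_forall_square fun _ => rfl, fun _ => Or.inr rfl⟩

theorem hasChainedRHS_r2 : r2.HasChainedRHS := by
  refine ⟨?_, fun v hv => ⟨(), ?_, Or.inr rfl⟩, ?_⟩
  · show ∀ v : Fin 2, _
    decide
  · change Fin 2 at v
    fin_cases v
    · rfl
    · exact absurd hv (by decide)
  · intro v
    change Fin 2 at v
    fin_cases v
    exacts [Or.inl rfl, Or.inr rfl]

theorem treeRules_hasChainedRHS : ∀ r ∈ TreeRules, r.HasChainedRHS := by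
  rintro r (rfl | rfl | rfl)
  -- `r1` has the same right-hand side and interface as `r0`
  exacts [hasChainedRHS_r0, hasChainedRHS_r0, hasChainedRHS_r2]

/-- If `G` is an input graph and `G ⇒*_𝓡 H`, then every `△`-labelled node of
`H` has either a `△`-labelled child or a rooted child. -/
theorem triangle_chains (G H : RGraph NodeLab Unit)
    (hG : IsInputGraph G) (hd : GTDerivStar TreeRules G H) :
    ∀ v : H.V, H.l v = some .tri →
      ∃ e : H.E, H.s e = v ∧
        (H.l (H.t e) = some .tri ∨ H.p (H.t e) = some true) :=
  hd.hasTriangleChains treeRules_hasChainedRHS (hasTriangleChains_of_forall_square hG.2.1)
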